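/- For any polynomial v of degree at most p on the interval (-1,1), the L²(-1,1) norm of v is bounded by (p+1)/√2 times the L¹(-1,1) norm of v. -/

import Mathlib

/-!
Expand `v` in the Legendre polynomials `P_j`, which are orthogonal on `[-1, 1]` with
`∫ P_j² = 2 / (2j + 1)` and satisfy `|P_j| ≤ 1` there. Then
`∫ v² = ∑_{j ≤ p} (2j + 1) / 2 · (∫ v P_j)²`, each `|∫ v P_j|` is at most `∫ |v|`, and
`∑_{j ≤ p} (2j + 1) / 2 = (p + 1)² / 2`.
-/

open Polynomial

noncomputable def polyIntegral (a b : ℝ) : ℝ[X] →ₗ[ℝ] ℝ where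
  toFun q := ∫ x in a..b, q.eval x
  map_add' q r := by
    simpa using intervalIntegral.integral_add (q.continuous.intervalIntegrable a b)
      (r.continuous.intervalIntegrable a b)
  map_smul' c q := by simp [intervalIntegral.integral_const_mul]

section polyIntegral

variable {a b : ℝ}

theorem polyIntegral_apply (q : ℝ[X]) : polyIntegral a b q = ∫ x in a..b, q.eval x := rfl

theorem polyIntegral_C_mul (c : ℝ) (q : ℝ[X]) :
    polyIntegral a b (C c * q) = c * polyIntegral a b q := by
  rw [← smul_eq_C_mul, map_smul, smul_eq_mul]

theorem polyIntegral_derivative (q : ℝ[X]) :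
    polyIntegral a b (derivative q) = q.eval b - q.eval a :=
  intervalIntegral.integral_deriv_eq_sub' _ (_root_.funext fun _ => q.deriv)
    (fun _ _ => q.differentiableAt) q.derivative.continuous.continuousOn

end polyIntegral

theorem map_mul_self_eq_sum_sq_div {K A ι : Type*} [Field K] [Ring A] [Algebra K A]
    (φ : A →ₗ[K] K) {e : ι → A} {s : Finset ι}
    (horth : ∀ i ∈ s, ∀ j ∈ s, i ≠ j → φ (e i * e j) = 0) (hne : ∀ i ∈ s, φ (e i * e i) ≠ 0)
    {c : ι → K} {v : A} (hv : v = ∑ i ∈ s, c i • e i) :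
    φ (v * v) = ∑ i ∈ s, φ (v * e i) ^ 2 / φ (e i * e i) := by
  have hcoeff : ∀ k ∈ s, φ (v * e k) = c k * φ (e k * e k) := by
    intro k hk
    rw [hv, Finset.sum_mul, map_sum, Finset.sum_eq_single_of_mem k hk]
    · rw [smul_mul_assoc, map_smul, smul_eq_mul]
    · intro i hi hik
      rw [smul_mul_assoc, map_smul, horth i hi k hk hik, smul_zero]
  calc φ (v * v) = ∑ i ∈ s, c i * φ (v * e i) := by
        nth_rewrite 2 [hv]
        rw [Finset.mul_sum]
        simp only [map_sum, mul_smul_comm, map_smul, smul_eq_mul]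
    _ = _ := Finset.sum_congr rfl fun i hi => by
        rw [hcoeff i hi]
        field_simp [hne i hi]

theorem le_max_of_forall_mul_deriv_nonneg {f : ℝ → ℝ} (hf : Differentiable ℝ f)
    (hf' : ∀ x, 0 ≤ x * deriv f x) {a b x : ℝ} (hx : x ∈ Set.Icc a b) :
    f x ≤ max (f a) (f b) := by
  rcases le_or_gt 0 x with hx0 | hx0
  · have hmono : MonotoneOn f (Set.Ici 0) :=
      monotoneOn_of_deriv_nonneg (convex_Ici 0) hf.continuous.continuousOn
        hf.differentiableOn fun y hy => by
          rw [interior_Ici] at hy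
          exact (mul_nonneg_iff_of_pos_left hy).mp (hf' y)
    exact (hmono hx0 (hx0.trans hx.2) hx.2).trans (le_max_right _ _)
  · have hanti : AntitoneOn f (Set.Iic 0) :=
      antitoneOn_of_deriv_nonpos (convex_Iic 0) hf.continuous.continuousOn
        hf.differentiableOn fun y hy => by
          rw [interior_Iic] at hy
          exact nonpos_of_mul_nonneg_right (hf' y) hy
    exact (hanti (hx.1.trans hx0.le) hx0.le hx.1).trans (le_max_left _ _)

noncomputable def legendre : ℕ → ℝ[X]
  | 0 => 1
  | 1 => X
  | n + 2 => C (n + 2 : ℝ)⁻¹ *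
      ((2 * (n : ℝ[X]) + 3) * X * legendre (n + 1) - ((n : ℝ[X]) + 1) * legendre n)

@[simp] theorem legendre_zero : legendre 0 = 1 := by rw [legendre]

@[simp] theorem legendre_one : legendre 1 = X := by rw [legendre]

theorem legendre_recurrence (n : ℕ) :
    ((n : ℝ[X]) + 2) * legendre (n + 2) =
      (2 * (n : ℝ[X]) + 3) * X * legendre (n + 1) - ((n : ℝ[X]) + 1) * legendre n := by
  have h : ((n : ℝ[X]) + 2) * C (n + 2 : ℝ)⁻¹ = 1 := by
    rw [show ((n : ℝ[X]) + 2) = C (n + 2 : ℝ) by simp [map_ofNat], ← C_mul,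
      mul_inv_cancel₀ (by positivity), C_1]
  rw [legendre, ← mul_assoc, h, one_mul]

theorem legendre_eval_one (n : ℕ) : (legendre n).eval 1 = 1 := by
  induction n using Nat.twoStepInduction with
  | zero => simp
  | one => simp
  | more n ih₀ ih₁ =>
    have h := congrArg (eval 1) (legendre_recurrence n)
    simp only [eval_mul, eval_sub, eval_add, eval_natCast, eval_ofNat, eval_one, eval_X, ih₀,
      ih₁] at h
    exact mul_left_cancel₀ (by positivity : (n + 2 : ℝ) ≠ 0) (by linear_combination h)

theorem legendre_eval_neg_one (n : ℕ) : (legendre n).eval (-1) = (-1) ^ n := by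
  induction n using Nat.twoStepInduction with
  | zero => simp
  | one => simp
  | more n ih₀ ih₁ =>
    have h := congrArg (eval (-1)) (legendre_recurrence n)
    simp only [eval_mul, eval_sub, eval_add, eval_natCast, eval_ofNat, eval_one, eval_X, ih₀,
      ih₁] at h
    exact mul_left_cancel₀ (by positivity : (n + 2 : ℝ) ≠ 0) (by linear_combination h)

theorem degree_legendre (n : ℕ) : (legendre n).degree = n := by
  induction n using Nat.twoStepInduction with
  | zero => simp
  | one => simp
  | more n ih₀ ih₁ =>
    have hlead : ((2 * (n : ℝ[X]) + 3) * X * legendre (n + 1)).degree = ↑(n + 2) := by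
      rw [show (2 * (n : ℝ[X]) + 3) = C (2 * n + 3 : ℝ) by simp [map_ofNat], degree_mul,
        degree_C_mul_X (by positivity), ih₁]
      norm_cast
      omega
    have hlow : (((n : ℝ[X]) + 1) * legendre n).degree < ↑(n + 2) := by
      rw [show ((n : ℝ[X]) + 1) = C (n + 1 : ℝ) by simp, degree_C_mul (by positivity), ih₀]
      exact_mod_cast (by omega : n < n + 2)
    rw [legendre, degree_C_mul (by positivity), degree_sub_eq_left_of_degree_lt (hlead ▸ hlow),
      hlead]

theorem derivative_legendre_succ (n : ℕ) :
    derivative (legendre (n + 1)) = X * derivative (legendre n) + ((n : ℝ[X]) + 1) * legendre n ∧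
      X * derivative (legendre (n + 1)) =
        derivative (legendre n) + ((n : ℝ[X]) + 1) * legendre (n + 1) := by
  induction n with
  | zero => simp
  | succ n ih =>
    obtain ⟨ha, hb⟩ := ih
    have hrec := legendre_recurrence n
    have hd := congrArg derivative hrec
    simp only [derivative_mul, derivative_add, derivative_sub, derivative_natCast,
      derivative_ofNat, derivative_one, derivative_X] at hd
    have hne : ((n : ℝ[X]) + 2) ≠ 0 := by norm_cast
    have ha' : derivative (legendre (n + 2)) =
        X * derivative (legendre (n + 1)) + ((n : ℝ[X]) + 2) * legendre (n + 1) :=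
      mul_left_cancel₀ hne (by linear_combination hd + ((n : ℝ[X]) + 1) * hb)
    push_cast
    refine ⟨by linear_combination ha', ?_⟩
    linear_combination X * ha' + X * hb - ha - hrec

theorem legendre_ode (n : ℕ) :
    derivative ((X ^ 2 - 1) * derivative (legendre n)) =
      (n : ℝ[X]) * ((n : ℝ[X]) + 1) * legendre n := by
  cases n with
  | zero => simp
  | succ n =>
    obtain ⟨ha, hb⟩ := derivative_legendre_succ n
    have h : (X ^ 2 - 1) * derivative (legendre (n + 1)) =
        ((n : ℝ[X]) + 1) * (X * legendre (n + 1) - legendre n) := by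
      linear_combination X * hb - ha
    rw [h]
    simp only [derivative_mul, derivative_add, derivative_sub, derivative_natCast,
      derivative_one, derivative_X]
    push_cast
    linear_combination ((n : ℝ[X]) + 1) * hb

theorem abs_eval_legendre_le_one (n : ℕ) {x : ℝ} (hx : x ∈ Set.Icc (-1) 1) :
    |(legendre n).eval x| ≤ 1 := by
  rcases n.eq_zero_or_pos with rfl | hn
  · simp
  set P := legendre n
  -- `H' = 2 X P'²`, so `H` is largest on `[-1, 1]` at the endpoints, where it equals `n (n + 1)`.
  set H : ℝ[X] := (n : ℝ[X]) * ((n : ℝ[X]) + 1) * P ^ 2 + (1 - X ^ 2) * derivative P ^ 2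
  have hH : derivative H = 2 * X * derivative P ^ 2 := by
    have hode := legendre_ode n
    simp only [H, derivative_mul, derivative_add, derivative_sub, derivative_natCast,
      derivative_one, derivative_X, derivative_sq, C_ofNat] at hode ⊢
    linear_combination (-2 * derivative P) * hode
  have hupper : H.eval x ≤ n * (n + 1) := by
    have hmul : ∀ y, 0 ≤ y * deriv (fun t => H.eval t) y := fun y => by
      rw [Polynomial.deriv, hH]
      simp only [eval_mul, eval_pow, eval_X, eval_ofNat]
      nlinarith [sq_nonneg (y * (derivative P).eval y)]
    have hend : ∀ y : ℝ, y ^ 2 = 1 → P.eval y ^ 2 = 1 → H.eval y = n * (n + 1) :=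
      fun y hy hPy => by
        simp only [H, eval_add, eval_mul, eval_pow, eval_sub, eval_one, eval_X, eval_natCast, hy,
          hPy]
        ring
    have := le_max_of_forall_mul_deriv_nonneg H.differentiable hmul hx
    rwa [hend 1 (by norm_num) (by simp [P, legendre_eval_one]),
      hend (-1) (by norm_num) (by rw [legendre_eval_neg_one, ← pow_mul, mul_comm, pow_mul]; simp),
      max_self] at this
  have hlower : n * (n + 1) * P.eval x ^ 2 ≤ H.eval x := by
    have : 0 ≤ 1 - x ^ 2 := by nlinarith [hx.1, hx.2]
    simp only [H, eval_add, eval_mul, eval_pow, eval_sub, eval_one, eval_X, eval_natCast]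
    nlinarith [mul_nonneg this (sq_nonneg ((derivative P).eval x))]
  have hpos : (0 : ℝ) < n * (n + 1) := by positivity
  rw [← sq_le_one_iff_abs_le_one]
  nlinarith

theorem polyIntegral_legendre_mul_legendre_of_ne {m n : ℕ} (h : m ≠ n) :
    polyIntegral (-1) 1 (legendre m * legendre n) = 0 := by
  set W : ℝ[X] := (X ^ 2 - 1) * derivative (legendre n) * legendre m -
    (X ^ 2 - 1) * derivative (legendre m) * legendre n
  have hW : derivative W = C ((n : ℝ) * (n + 1) - m * (m + 1)) * (legendre m * legendre n) := by
    rw [derivative_sub, derivative_mul (f := (X ^ 2 - 1) * derivative (legendre n)),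
      derivative_mul (f := (X ^ 2 - 1) * derivative (legendre m)), legendre_ode, legendre_ode]
    simp only [C_sub, C_mul, C_add, map_natCast, C_1]
    ring
  have hboundary : polyIntegral (-1) 1 (derivative W) = 0 := by
    rw [polyIntegral_derivative]
    simp [W]
  rw [hW, polyIntegral_C_mul] at hboundary
  refine (mul_eq_zero.mp hboundary).resolve_left ?_
  have hnm : (n : ℝ) - m ≠ 0 := sub_ne_zero.mpr (by exact_mod_cast h.symm)
  rw [show (n : ℝ) * (n + 1) - m * (m + 1) = (n - m) * (n + m + 1) by ring]
  exact mul_ne_zero hnm (by positivity)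

theorem polyIntegral_legendre_recurrence (a b : ℝ) (n : ℕ) (q : ℝ[X]) :
    ((n : ℝ) + 2) * polyIntegral a b (legendre (n + 2) * q) =
      (2 * (n : ℝ) + 3) * polyIntegral a b (X * legendre (n + 1) * q) -
        ((n : ℝ) + 1) * polyIntegral a b (legendre n * q) := by
  rw [← polyIntegral_C_mul, ← polyIntegral_C_mul, ← polyIntegral_C_mul, ← map_sub]
  congr 1
  simp only [C_add, C_mul, map_natCast, C_ofNat, C_1]
  linear_combination q * legendre_recurrence n

theorem polyIntegral_X_mul_legendre_mul_legendre_succ (n : ℕ) :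
    polyIntegral (-1) 1 (X * legendre n * legendre (n + 1)) =
      ((n : ℝ) + 1) / (2 * n + 3) * polyIntegral (-1) 1 (legendre n * legendre n) := by
  have h := polyIntegral_legendre_recurrence (-1) 1 n (legendre n)
  rw [polyIntegral_legendre_mul_legendre_of_ne (by omega), mul_zero, mul_right_comm] at h
  field_simp
  linarith

theorem polyIntegral_legendre_mul_self (n : ℕ) :
    polyIntegral (-1) 1 (legendre n * legendre n) = 2 / (2 * n + 1) := by
  induction n using Nat.twoStepInduction with
  | zero => simp [polyIntegral_apply]; norm_num
  | one => simp [polyIntegral_apply, ← sq, integral_pow]; norm_num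
  | more n _ ih₁ =>
    have h := polyIntegral_legendre_recurrence (-1) 1 n (legendre (n + 2))
    rw [polyIntegral_legendre_mul_legendre_of_ne (m := n) (n := n + 2) (by omega), mul_zero,
      sub_zero, polyIntegral_X_mul_legendre_mul_legendre_succ, ih₁] at h
    push_cast at h ⊢
    field_simp at h ⊢
    apply mul_left_cancel₀ (show ((n : ℝ) + 2) * (2 * n + 3) ≠ 0 by positivity)
    linear_combination h

noncomputable def legendreSequence : Polynomial.Sequence ℝ := ⟨legendre, degree_legendre⟩

theorem exists_eq_sum_smul_legendre {p : ℕ} {v : ℝ[X]} (hv : v.degree ≤ p) :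
    ∃ c : ℕ → ℝ, v = ∑ i ∈ Finset.range (p + 1), c i • legendre i := by
  have hspan := legendreSequence.span_degreeLT (m := p + 1) fun i _ =>
    (leadingCoeff_ne_zero.mpr (legendreSequence.ne_zero i)).isUnit
  have hmem : v ∈ Submodule.span ℝ (legendreSequence '' ↑(Finset.range (p + 1))) := by
    rwa [Finset.coe_range, hspan, degreeLT_succ_eq_degreeLE, mem_degreeLE]
  obtain ⟨l, hl, rfl⟩ := (Finsupp.mem_span_image_iff_linearCombination ℝ).mp hmem
  exact ⟨l, Finsupp.linearCombination_apply_of_mem_supported ℝ hl⟩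

theorem polyIntegral_mul_self_eq_sum_legendre {p : ℕ} {v : ℝ[X]} (hv : v.degree ≤ p) :
    polyIntegral (-1) 1 (v * v) = ∑ j ∈ Finset.range (p + 1),
      (2 * (j : ℝ) + 1) / 2 * polyIntegral (-1) 1 (v * legendre j) ^ 2 := by
  obtain ⟨c, hc⟩ := exists_eq_sum_smul_legendre hv
  rw [map_mul_self_eq_sum_sq_div _
    (fun i _ j _ hij => polyIntegral_legendre_mul_legendre_of_ne hij)
    (fun i _ => by rw [polyIntegral_legendre_mul_self]; positivity) hc]
  refine Finset.sum_congr rfl fun j _ => ?_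
  rw [polyIntegral_legendre_mul_self]
  field_simp

theorem abs_polyIntegral_mul_legendre_le (v : ℝ[X]) (n : ℕ) :
    |polyIntegral (-1) 1 (v * legendre n)| ≤ ∫ x in (-1 : ℝ)..1, |v.eval x| := by
  rw [polyIntegral_apply]
  refine (intervalIntegral.abs_integral_le_integral_abs (by norm_num)).trans <|
    intervalIntegral.integral_mono_on (by norm_num)
      ((v * legendre n).continuous.abs.intervalIntegrable _ _)
      (v.continuous.abs.intervalIntegrable _ _) fun x hx => ?_
  rw [eval_mul, abs_mul]
  exact mul_le_of_le_one_right (abs_nonneg _) (abs_eval_legendre_le_one n hx)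

theorem sum_range_two_mul_add_one (n : ℕ) : ∑ i ∈ Finset.range n, (2 * (i : ℝ) + 1) = n ^ 2 := by
  induction n with
  | zero => simp
  | succ n ih =>
    rw [Finset.sum_range_succ, ih]
    push_cast
    ring

/-- For any polynomial `v` of degree at most `p` on the interval `(-1,1)`, the `L²(-1,1)` norm
of `v` is bounded by `(p+1)/√2` times the `L¹(-1,1)` norm of `v`. -/
theorem polynomial_L2_le_L1 (p : ℕ) (v : Polynomial ℝ) (hdeg : v.degree ≤ p) :
    Real.sqrt (∫ y in (-1 : ℝ)..1, (v.eval y) ^ 2) ≤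
      (((p : ℝ) + 1) / Real.sqrt 2) * ∫ y in (-1 : ℝ)..1, |v.eval y| := by
  set L := ∫ y in (-1 : ℝ)..1, |v.eval y|
  have hcoeff (j : ℕ) : polyIntegral (-1) 1 (v * legendre j) ^ 2 ≤ L ^ 2 := by
    simpa only [sq_abs] using
      pow_le_pow_left₀ (abs_nonneg _) (abs_polyIntegral_mul_legendre_le v j) 2
  have hsum : ∑ j ∈ Finset.range (p + 1), (2 * (j : ℝ) + 1) / 2 * L ^ 2 =
      (((p : ℝ) + 1) / Real.sqrt 2 * L) ^ 2 := by
    rw [← Finset.sum_mul, ← Finset.sum_div, sum_range_two_mul_add_one, mul_pow, div_pow,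
      Real.sq_sqrt zero_le_two]
    push_cast
    ring
  have hL : 0 ≤ L := intervalIntegral.integral_nonneg (by norm_num) fun _ _ => abs_nonneg _
  calc Real.sqrt (∫ y in (-1 : ℝ)..1, (v.eval y) ^ 2)
      ≤ Real.sqrt ((((p : ℝ) + 1) / Real.sqrt 2 * L) ^ 2) := by
        rw [show ∫ y in (-1 : ℝ)..1, (v.eval y) ^ 2 = polyIntegral (-1) 1 (v * v) by
          simp [polyIntegral_apply, sq], polyIntegral_mul_self_eq_sum_legendre hdeg, ← hsum]
        exact Real.sqrt_le_sqrt <| Finset.sum_le_sum fun j _ =>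
          mul_le_mul_of_nonneg_left (hcoeff j) (by positivity)
    _ = ((p : ℝ) + 1) / Real.sqrt 2 * L := Real.sqrt_sq (by positivity)
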